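/- If X is a reflexive Banach space and Θ_j is weakly closed for every j ∈ J, then both G and H are weakly sequentially lower semicontinuous: for every sequence (x_k) in X converging to x̄ in the weak topology, G(x̄) ≤ liminf_{k→∞} G(x_k) and H(x̄) ≤ liminf_{k→∞} H(x_k). -/

import Mathlib

/-!
In the weak topology `gauge F` is lower semicontinuous: it is continuous with convex sublevel sets,
and closed convex sets are weakly closed. Hence each `C_F(·; Ω_i)`, a bounded supremum of the
translates `x ↦ gauge F (q - x)`, is weakly lower semicontinuous. For `c ≥ 0` the sublevel set
`{T_F(·; Θ) ≤ c}` is `⋂_{r > c} (Θ - r • F)`; in a reflexive space `r • F` is weakly compact, so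
each `Θ - r • F` is weakly closed. Finite maxima and sums preserve lower semicontinuity. Finally a
weakly convergent sequence is norm bounded (Banach–Steinhaus), so `G` and `H` stay bounded along
it, which is what the real `liminf` needs.
-/

open Set Pointwise Filter Topology Bornology Function

variable {X : Type*} [NormedAddCommGroup X] [NormedSpace ℝ X]

/-- The Minkowski gauge of `F`: `ρ_F(x) = inf {t ≥ 0 : x ∈ t • F}`. -/
noncomputable def rhoF (F : Set X) (x : X) : ℝ :=
  sInf {t : ℝ | 0 ≤ t ∧ x ∈ t • F}

/-- The maximal time function `C_F(x; Q) = sup {ρ_F(q - x) : q ∈ Q}`. -/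
noncomputable def maxTime (F Q : Set X) (x : X) : ℝ :=
  sSup ((fun q => rhoF F (q - x)) '' Q)

/-- The minimal time function `T_F(x; Θ) = inf {ρ_F(q - x) : q ∈ Θ}`. -/
noncomputable def minTime (F Θ : Set X) (x : X) : ℝ :=
  sInf ((fun q => rhoF F (q - x)) '' Θ)

/-- `G(x) = max {C_F(x; Ω_i), T_F(x; Θ_j) : i ∈ I, j ∈ J}`. -/
noncomputable def GFun {ι κ : Type*} (F : Set X) (I : Finset ι) (J : Finset κ)
    (Ω : ι → Set X) (Θ : κ → Set X) (x : X) : ℝ :=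
  sSup ((fun i => maxTime F (Ω i) x) '' ↑I ∪ (fun j => minTime F (Θ j) x) '' ↑J)

/-- `H(x) = Σ_{i∈I} C_F(x; Ω_i) + Σ_{j∈J} T_F(x; Θ_j)`. -/
noncomputable def HFun {ι κ : Type*} (F : Set X) (I : Finset ι) (J : Finset κ)
    (Ω : ι → Set X) (Θ : κ → Set X) (x : X) : ℝ :=
  ∑ i ∈ I, maxTime F (Ω i) x + ∑ j ∈ J, minTime F (Θ j) x

/-- A set is weakly closed if it is closed in the weak topology on `Y`. -/
def WeaklyClosed (Y : Type*) [NormedAddCommGroup Y] [NormedSpace ℝ Y] (A : Set Y) : Prop :=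
  IsClosed (toWeakSpace ℝ Y '' A)

/-- A normed space is reflexive if the canonical embedding into its double dual is surjective. -/
def IsReflexiveSpace (Y : Type*) [NormedAddCommGroup Y] [NormedSpace ℝ Y] : Prop :=
  Function.Surjective (NormedSpace.inclusionInDoubleDual ℝ Y)

lemma rhoF_eq_gauge {F : Set X} (hF : F.Nonempty) : rhoF F = gauge F := by
  funext x
  rcases eq_or_ne x 0 with rfl | hx
  · rw [gauge_zero]
    refine IsLeast.csInf_eq ⟨⟨le_rfl, ?_⟩, fun t ht => ht.1⟩
    rw [zero_smul_set hF]
    exact Set.zero_mem_zero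
  · unfold rhoF gauge
    congr 1
    ext t
    refine ⟨fun ⟨ht, hxt⟩ => ⟨ht.lt_of_ne ?_, hxt⟩, fun ⟨ht, hxt⟩ => ⟨ht.le, hxt⟩⟩
    rintro rfl
    exact hx (mem_singleton_iff.mp (zero_smul_set_subset F hxt))

lemma rhoF_nonneg (F : Set X) (x : X) : 0 ≤ rhoF F x :=
  Real.sInf_nonneg fun _ ht => ht.1

lemma maxTime_nonneg (F Q : Set X) (x : X) : 0 ≤ maxTime F Q x :=
  Real.sSup_nonneg <| forall_mem_image.2 fun _ _ => rhoF_nonneg F _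

lemma minTime_nonneg (F Θ : Set X) (x : X) : 0 ≤ minTime F Θ x :=
  Real.sInf_nonneg <| forall_mem_image.2 fun _ _ => rhoF_nonneg F _

lemma minTime_le_rhoF {F Θ : Set X} {q : X} (hq : q ∈ Θ) (x : X) :
    minTime F Θ x ≤ rhoF F (q - x) :=
  csInf_le ⟨0, forall_mem_image.2 fun _ _ => rhoF_nonneg F _⟩ (mem_image_of_mem _ hq)

lemma bddAbove_gauge_image {F s : Set X} (hFconv : Convex ℝ F) (hF : F ∈ 𝓝 0)
    (hs : IsBounded s) : BddAbove (gauge F '' s) :=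
  let ⟨_, hK⟩ := hFconv.lipschitz_gauge hF
  (hK.isBounded_image hs).bddAbove

lemma mem_smul_of_gauge_lt {F : Set X} (hFconv : Convex ℝ F) (hF : F ∈ 𝓝 0) {y : X} {r : ℝ}
    (h : gauge F y < r) : y ∈ r • F := by
  have := setOfPred_gauge_le_eq hFconv (mem_of_mem_nhds hF) (absorbent_nhds_zero hF)
    (gauge_nonneg (s := F) y)
  exact mem_iInter₂.1 (this.subset (le_refl (gauge F y))) r h

lemma bddAbove_maxTime_image {F Q s : Set X} (hFconv : Convex ℝ F) (hF : F ∈ 𝓝 0)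
    (hQ : IsBounded Q) (hs : IsBounded s) : BddAbove (maxTime F Q '' s) := by
  obtain ⟨C, hC⟩ := bddAbove_gauge_image hFconv hF (hQ.sub hs)
  refine ⟨max C 0, forall_mem_image.2 fun x hx => Real.sSup_le ?_ (le_max_right _ _)⟩
  rintro _ ⟨q, hq, rfl⟩
  rw [rhoF_eq_gauge ⟨0, mem_of_mem_nhds hF⟩]
  exact (hC (mem_image_of_mem _ (sub_mem_sub hq hx))).trans (le_max_left _ _)

lemma bddAbove_minTime_image {F Θ s : Set X} (hFconv : Convex ℝ F) (hF : F ∈ 𝓝 0)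
    (hΘ : Θ.Nonempty) (hs : IsBounded s) : BddAbove (minTime F Θ '' s) := by
  obtain ⟨q, hq⟩ := hΘ
  obtain ⟨C, hC⟩ := bddAbove_gauge_image hFconv hF ((isBounded_singleton (x := q)).sub hs)
  refine ⟨C, forall_mem_image.2 fun x hx => (minTime_le_rhoF hq x).trans ?_⟩
  rw [rhoF_eq_gauge ⟨0, mem_of_mem_nhds hF⟩]
  exact hC (mem_image_of_mem _ (sub_mem_sub rfl hx))

def WeaklyLowerSemicontinuous (f : X → ℝ) : Prop :=
  LowerSemicontinuous fun w : WeakSpace ℝ X => f ((toWeakSpace ℝ X).symm w)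

lemma weaklyLowerSemicontinuous_iff {f : X → ℝ} :
    WeaklyLowerSemicontinuous f ↔ ∀ c, WeaklyClosed X {x | f x ≤ c} := by
  simp only [WeaklyLowerSemicontinuous, lowerSemicontinuous_iff_isClosed_preimage, WeaklyClosed,
    LinearEquiv.image_eq_preimage_symm]
  rfl

lemma Convex.weaklyClosed {s : Set X} (hconv : Convex ℝ s) (hc : IsClosed s) :
    WeaklyClosed X s := by
  rw [WeaklyClosed, ← hc.closure_eq, hconv.toWeakSpace_closure ℝ]
  exact isClosed_closure

lemma WeaklyClosed.biInter {ι : Type*} {p : ι → Prop} {s : ι → Set X}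
    (h : ∀ i, p i → WeaklyClosed X (s i)) : WeaklyClosed X (⋂ (i) (_ : p i), s i) := by
  rw [WeaklyClosed, image_iInter₂ (toWeakSpace ℝ X).bijective]
  exact isClosed_biInter h

lemma WeaklyClosed.sub_of_isCompact {s K : Set X} (hs : WeaklyClosed X s)
    (hK : IsCompact (toWeakSpace ℝ X '' K)) : WeaklyClosed X (s - K) := by
  rw [WeaklyClosed, image_sub, sub_eq_add_neg]
  exact IsClosed.add_right_of_isCompact hs hK.neg

lemma QuasiconvexOn.weaklyLowerSemicontinuous {f : X → ℝ} (hf : QuasiconvexOn ℝ univ f)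
    (hf' : LowerSemicontinuous f) : WeaklyLowerSemicontinuous f :=
  weaklyLowerSemicontinuous_iff.2 fun c =>
    (by simpa only [mem_univ, true_and] using hf c : Convex ℝ {x | f x ≤ c}).weaklyClosed
      (lowerSemicontinuous_iff_isClosed_preimage.1 hf' c)

lemma WeaklyLowerSemicontinuous.comp_sub_left {f : X → ℝ} (hf : WeaklyLowerSemicontinuous f)
    (q : X) : WeaklyLowerSemicontinuous fun x => f (q - x) := by
  have := hf.comp (continuous_sub_left (toWeakSpace ℝ X q))
  simpa only [WeaklyLowerSemicontinuous, comp_def, map_sub, LinearEquiv.symm_apply_apply] using this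

lemma weaklyLowerSemicontinuous_gauge {F : Set X} (hFconv : Convex ℝ F) (hF : F ∈ 𝓝 0) :
    WeaklyLowerSemicontinuous (gauge F) := by
  refine QuasiconvexOn.weaklyLowerSemicontinuous (fun c => ?_)
    (continuous_gauge hFconv hF).lowerSemicontinuous
  simpa only [mem_univ, true_and] using
    hFconv.setOfPred_gauge_le (mem_of_mem_nhds hF) (absorbent_nhds_zero hF) c

lemma weaklyLowerSemicontinuous_maxTime {F Q : Set X} (hFconv : Convex ℝ F) (hF : F ∈ 𝓝 0)
    (hQ : IsBounded Q) : WeaklyLowerSemicontinuous (maxTime F Q) := by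
  have hbdd : ∀ x, BddAbove (range fun q : Q => gauge F (q - x)) := by
    intro x
    obtain ⟨C, hC⟩ := bddAbove_gauge_image hFconv hF (hQ.sub (isBounded_singleton (x := x)))
    exact ⟨C, forall_mem_range.2 fun q => hC (mem_image_of_mem _ (sub_mem_sub q.2 rfl))⟩
  simp only [WeaklyLowerSemicontinuous, maxTime, rhoF_eq_gauge ⟨0, mem_of_mem_nhds hF⟩,
    image_eq_range]
  exact lowerSemicontinuous_ciSup (fun _ => hbdd _)
    fun q => (weaklyLowerSemicontinuous_gauge hFconv hF).comp_sub_left q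

lemma surjective_inclusionInDoubleDualWeak (hrefl : IsReflexiveSpace X) :
    Surjective (NormedSpace.inclusionInDoubleDualWeak ℝ X) := by
  intro ψ
  obtain ⟨x, hx⟩ := hrefl (WeakDual.toStrongDual ψ)
  refine ⟨toWeakSpace ℝ X x, DFunLike.ext _ _ fun φ => ?_⟩
  exact DFunLike.congr_fun hx φ

lemma isCompact_toWeakSpace_image (hrefl : IsReflexiveSpace X) {s : Set X} (hc : IsClosed s)
    (hb : IsBounded s) (hconv : Convex ℝ s) : IsCompact (toWeakSpace ℝ X '' s) := by
  have hw : IsClosed (toWeakSpace ℝ X '' s) := hconv.weaklyClosed hc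
  rw [← hw.closure_eq]
  refine NormedSpace.isCompact_closure_of_isBounded ℝ X _ ?_ ?_
  · rwa [preimage_image_eq _ (toWeakSpace ℝ X).injective]
  · rw [(surjective_inclusionInDoubleDualWeak hrefl).range_eq]
    exact subset_univ _

lemma setOf_minTime_le_eq {F Θ : Set X} (hFconv : Convex ℝ F) (hF : F ∈ 𝓝 0)
    (hΘ : Θ.Nonempty) {c : ℝ} (hc : 0 ≤ c) :
    {x | minTime F Θ x ≤ c} = ⋂ (r) (_ : c < r), Θ - r • F := by
  ext x
  simp only [mem_ofPred_eq, mem_iInter, minTime, rhoF_eq_gauge ⟨0, mem_of_mem_nhds hF⟩]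
  constructor
  · intro hx r hr
    obtain ⟨_, ⟨q, hq, rfl⟩, hqr⟩ := exists_lt_of_csInf_lt (hΘ.image _) (hx.trans_lt hr)
    exact ⟨q, hq, q - x, mem_smul_of_gauge_lt hFconv hF hqr, sub_sub_cancel q x⟩
  · refine fun hx => le_of_forall_gt_imp_ge_of_dense fun r hr => ?_
    obtain ⟨q, hq, y, hy, rfl⟩ := hx r hr
    calc sInf ((fun p => gauge F (p - (q - y))) '' Θ) ≤ gauge F (q - (q - y)) :=
          csInf_le ⟨0, forall_mem_image.2 fun _ _ => gauge_nonneg _⟩ (mem_image_of_mem _ hq)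
      _ ≤ r := by rw [sub_sub_cancel]; exact gauge_le_of_mem (hc.trans hr.le) hy

lemma weaklyLowerSemicontinuous_minTime (hrefl : IsReflexiveSpace X) {F Θ : Set X}
    (hFc : IsClosed F) (hFb : IsBounded F) (hFconv : Convex ℝ F) (hF : F ∈ 𝓝 0)
    (hΘ : Θ.Nonempty) (hΘw : WeaklyClosed X Θ) : WeaklyLowerSemicontinuous (minTime F Θ) := by
  refine weaklyLowerSemicontinuous_iff.2 fun c => ?_
  rcases lt_or_ge c 0 with hc | hc
  · have hempty : {x | minTime F Θ x ≤ c} = ∅ :=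
      eq_empty_of_forall_notMem fun x hx => hc.not_ge ((minTime_nonneg F Θ x).trans hx)
    simp only [WeaklyClosed, hempty, image_empty, isClosed_empty]
  · rw [setOf_minTime_le_eq hFconv hF hΘ hc]
    refine WeaklyClosed.biInter fun r hr => hΘw.sub_of_isCompact ?_
    have hr0 : r ≠ 0 := (hc.trans_lt hr).ne'
    exact isCompact_toWeakSpace_image hrefl (hFc.smul_of_ne_zero hr0) (hFb.smul₀ r)
      (hFconv.smul r)

lemma isBounded_range_of_tendsto_toWeakSpace {x : ℕ → X} {x₀ : X}
    (hx : Tendsto (fun k => toWeakSpace ℝ X (x k)) atTop (𝓝 (toWeakSpace ℝ X x₀))) :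
    IsBounded (range x) := by
  have hφ (φ : StrongDual ℝ X) :
      ∃ C, ∀ k, ‖NormedSpace.inclusionInDoubleDual ℝ X (x k) φ‖ ≤ C := by
    obtain ⟨C, hC⟩ := (((WeakBilin.eval_continuous _ φ).tendsto _).comp hx).norm.bddAbove_range
    exact ⟨C, fun k => hC (mem_range_self k)⟩
  obtain ⟨C, hC⟩ := banach_steinhaus hφ
  refine isBounded_iff_forall_norm_le.2 ⟨C, forall_mem_range.2 fun k => ?_⟩
  rw [← (NormedSpace.inclusionInDoubleDualLi ℝ).norm_map (x k)]
  exact hC k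

lemma WeaklyLowerSemicontinuous.le_liminf {f : X → ℝ} (hf : WeaklyLowerSemicontinuous f)
    {α : Type*} {l : Filter α} [l.NeBot] {x : α → X} {x₀ : X}
    (hx : Tendsto (fun k => toWeakSpace ℝ X (x k)) l (𝓝 (toWeakSpace ℝ X x₀)))
    (hbdd : IsBoundedUnder (· ≤ ·) l fun k => f (x k)) :
    f x₀ ≤ liminf (fun k => f (x k)) l := by
  refine le_of_forall_lt_imp_le_of_dense fun y hy => ?_
  have := hx.eventually (hf (toWeakSpace ℝ X x₀) y (by simpa using hy))
  exact le_liminf_of_le hbdd.isCoboundedUnder_flip (this.mono fun k hk => by simpa using hk.le)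

lemma WeaklyLowerSemicontinuous.sSup_image {𝓕 : Set (X → ℝ)} (h𝓕 : 𝓕.Finite)
    (h : ∀ f ∈ 𝓕, WeaklyLowerSemicontinuous f) :
    WeaklyLowerSemicontinuous fun x => sSup ((fun f => f x) '' 𝓕) := by
  simp only [WeaklyLowerSemicontinuous, image_eq_range]
  have : Finite 𝓕 := h𝓕
  exact lowerSemicontinuous_ciSup (fun _ => (finite_range _).bddAbove) fun f => h f f.2

section TimeFunctions

variable {ι κ : Type*} {F : Set X} {I : Finset ι} {J : Finset κ} {Ω : ι → Set X} {Θ : κ → Set X}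

lemma weaklyLowerSemicontinuous_GFun (hC : ∀ i ∈ I, WeaklyLowerSemicontinuous (maxTime F (Ω i)))
    (hT : ∀ j ∈ J, WeaklyLowerSemicontinuous (minTime F (Θ j))) :
    WeaklyLowerSemicontinuous (GFun F I J Ω Θ) := by
  have := WeaklyLowerSemicontinuous.sSup_image
    (((I.finite_toSet.image fun i => maxTime F (Ω i))).union
      (J.finite_toSet.image fun j => minTime F (Θ j)))
    (by rintro _ (⟨i, hi, rfl⟩ | ⟨j, hj, rfl⟩); exacts [hC i hi, hT j hj])
  convert this using 2 with x
  simp only [GFun, image_union, image_image]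

lemma weaklyLowerSemicontinuous_HFun (hC : ∀ i ∈ I, WeaklyLowerSemicontinuous (maxTime F (Ω i)))
    (hT : ∀ j ∈ J, WeaklyLowerSemicontinuous (minTime F (Θ j))) :
    WeaklyLowerSemicontinuous (HFun F I J Ω Θ) :=
  (lowerSemicontinuous_sum hC).add (lowerSemicontinuous_sum hT)

lemma GFun_le_HFun (x : X) : GFun F I J Ω Θ x ≤ HFun F I J Ω Θ x := by
  have hC : 0 ≤ ∑ i ∈ I, maxTime F (Ω i) x := I.sum_nonneg fun i _ => maxTime_nonneg _ _ _
  have hT : 0 ≤ ∑ j ∈ J, minTime F (Θ j) x := J.sum_nonneg fun j _ => minTime_nonneg _ _ _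
  refine Real.sSup_le ?_ (add_nonneg hC hT)
  rintro _ (⟨i, hi, rfl⟩ | ⟨j, hj, rfl⟩)
  · exact (I.single_le_sum (fun i _ => maxTime_nonneg _ _ _) hi).trans
      (le_add_of_nonneg_right hT)
  · exact (J.single_le_sum (fun j _ => minTime_nonneg _ _ _) hj).trans
      (le_add_of_nonneg_left hC)

lemma bddAbove_HFun_image {s : Set X} (hC : ∀ i ∈ I, BddAbove (maxTime F (Ω i) '' s))
    (hT : ∀ j ∈ J, BddAbove (minTime F (Θ j) '' s)) : BddAbove (HFun F I J Ω Θ '' s) := by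
  choose! a ha using hC
  choose! b hb using hT
  refine ⟨∑ i ∈ I, a i + ∑ j ∈ J, b j, forall_mem_image.2 fun x hx => ?_⟩
  exact add_le_add (I.sum_le_sum fun i hi => ha i hi (mem_image_of_mem _ hx))
    (J.sum_le_sum fun j hj => hb j hj (mem_image_of_mem _ hx))

end TimeFunctions

theorem stmt1_general
    {ι κ : Type*} (F : Set X) (I : Finset ι) (J : Finset κ)
    (Ω : ι → Set X) (Θ : κ → Set X)
    (hFc : IsClosed F) (hFb : IsBounded F) (hFconv : Convex ℝ F)
    (hF0 : (0 : X) ∈ interior F)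
    (hΩb : ∀ i ∈ I, IsBounded (Ω i))
    (hΘne : ∀ j ∈ J, (Θ j).Nonempty)
    (hrefl : IsReflexiveSpace X) (hΘw : ∀ j ∈ J, WeaklyClosed X (Θ j)) :
    ∀ (x : ℕ → X) (xbar : X),
      Tendsto (fun k => toWeakSpace ℝ X (x k)) atTop (nhds (toWeakSpace ℝ X xbar)) →
      GFun F I J Ω Θ xbar ≤ Filter.liminf (fun k => GFun F I J Ω Θ (x k)) atTop ∧
      HFun F I J Ω Θ xbar ≤ Filter.liminf (fun k => HFun F I J Ω Θ (x k)) atTop := by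
  intro x xbar hx
  have hF : F ∈ 𝓝 0 := mem_interior_iff_mem_nhds.mp hF0
  have hC i (hi : i ∈ I) := weaklyLowerSemicontinuous_maxTime hFconv hF (hΩb i hi)
  have hT j (hj : j ∈ J) :=
    weaklyLowerSemicontinuous_minTime hrefl hFc hFb hFconv hF (hΘne j hj) (hΘw j hj)
  have hxb := isBounded_range_of_tendsto_toWeakSpace hx
  have hH : IsBoundedUnder (· ≤ ·) atTop fun k => HFun F I J Ω Θ (x k) := by
    refine BddAbove.isBoundedUnder_of_range ?_
    rw [range_comp' (HFun F I J Ω Θ)]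
    exact bddAbove_HFun_image (fun i hi => bddAbove_maxTime_image hFconv hF (hΩb i hi) hxb)
      fun j hj => bddAbove_minTime_image hFconv hF (hΘne j hj) hxb
  have hG : IsBoundedUnder (· ≤ ·) atTop fun k => GFun F I J Ω Θ (x k) :=
    hH.mono_le (Eventually.of_forall fun k => GFun_le_HFun (x k))
  exact ⟨(weaklyLowerSemicontinuous_GFun hC hT).le_liminf hx hG,
    (weaklyLowerSemicontinuous_HFun hC hT).le_liminf hx hH⟩

/-- Lemma 2.2. -/
theorem stmt1 [CompleteSpace X]
    {ι κ : Type*} (F : Set X) (I : Finset ι) (J : Finset κ)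
    (Ω : ι → Set X) (Θ : κ → Set X) (S : Set X)
    (hFc : IsClosed F) (hFb : IsBounded F) (hFconv : Convex ℝ F)
    (hF0 : (0 : X) ∈ interior F)
    (hΩne : ∀ i ∈ I, (Ω i).Nonempty) (hΩc : ∀ i ∈ I, IsClosed (Ω i))
    (hΩb : ∀ i ∈ I, IsBounded (Ω i))
    (hΘne : ∀ j ∈ J, (Θ j).Nonempty) (hΘc : ∀ j ∈ J, IsClosed (Θ j))
    (hSne : S.Nonempty) (hSc : IsClosed S)
    (hIJ : I.Nonempty ∨ J.Nonempty)
    (hrefl : IsReflexiveSpace X) (hΘw : ∀ j ∈ J, WeaklyClosed X (Θ j)) :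
    ∀ (x : ℕ → X) (xbar : X),
      Tendsto (fun k => toWeakSpace ℝ X (x k)) atTop (nhds (toWeakSpace ℝ X xbar)) →
      GFun F I J Ω Θ xbar ≤ Filter.liminf (fun k => GFun F I J Ω Θ (x k)) atTop ∧
      HFun F I J Ω Θ xbar ≤ Filter.liminf (fun k => HFun F I J Ω Θ (x k)) atTop :=
  stmt1_general F I J Ω Θ hFc hFb hFconv hF0 hΩb hΘne hrefl hΘw
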